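/- Let d be an odd positive integer, k ≥ 3, and let 𝒟 = {D₁,…,Dₖ} be partitions of d with Σᵢ ν(Dᵢ) = d − 1 and gcd(D₁) ≠ 1. Let αᵢ ∈ Dᵢ be permutations of a d-element set such that ⟨α₁,…,αₖ⟩ has t > 1 orbits, and suppose there exists a permutation ω with ω² = α₁α₂⋯αₖ such that ⟨α₁,…,αₖ, ω⟩ is transitive. Then the product α₁α₂⋯αₖ is the product of exactly 2t − 1 disjoint cycles; that is, the number of orbits of ⟨α₁⋯αₖ⟩ on the d points (counting fixed points as trivial cycles) equals 2t − 1. -/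

import Mathlib

/-- The cycle type of a permutation, including fixed points as parts equal to `1`. -/
def fullCycleType {Ω : Type*} [Fintype Ω] [DecidableEq Ω] (σ : Equiv.Perm Ω) : Multiset ℕ :=
  σ.cycleType + Multiset.replicate (Fintype.card Ω - σ.support.card) 1

/-- A multiset of positive integers summing to `d`, i.e. a partition of `d`. -/
def IsPartitionOf (d : ℕ) (D : Multiset ℕ) : Prop :=
  (∀ x ∈ D, 0 < x) ∧ D.sum = d

/-- The defect `ν(D) = Σⱼ (dⱼ − 1)` of a partition. -/
def nu (D : Multiset ℕ) : ℕ := (D.map (· - 1)).sum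

/-- The partition `[2,…,2,1]` of an odd number `d`, with `(d−1)/2` parts equal to `2`. -/
def twosAndOne (d : ℕ) : Multiset ℕ := Multiset.replicate ((d - 1) / 2) 2 + {1}

/-- A subgroup of the symmetric group on `Ω` is transitive. -/
def SubgroupTransitive {Ω : Type*} (G : Subgroup (Equiv.Perm Ω)) : Prop :=
  ∀ x y : Ω, ∃ g ∈ G, g x = y

/-- `Λ` is a block for the subgroup `G` of the symmetric group on `Ω`. -/
def IsBlockOf {Ω : Type*} (G : Subgroup (Equiv.Perm Ω)) (Λ : Set Ω) : Prop :=
  Λ.Nonempty ∧ ∀ g ∈ G, (⇑g '' Λ = Λ ∨ Disjoint (⇑g '' Λ) Λ)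

/-- A block is trivial if it is a singleton or the whole set. -/
def TrivialBlock {Ω : Type*} (Λ : Set Ω) : Prop :=
  (∃ x, Λ = {x}) ∨ Λ = Set.univ

/-- A subgroup of the symmetric group is primitive: transitive with only trivial blocks. -/
def SubgroupPrimitive {Ω : Type*} (G : Subgroup (Equiv.Perm Ω)) : Prop :=
  SubgroupTransitive G ∧ ∀ Λ : Set Ω, IsBlockOf G Λ → TrivialBlock Λ

/-- A subgroup of the symmetric group is imprimitive: transitive but not primitive. -/
def SubgroupImprimitive {Ω : Type*} (G : Subgroup (Equiv.Perm Ω)) : Prop :=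
  SubgroupTransitive G ∧ ¬ SubgroupPrimitive G

/-- The orbit of `x` under a subgroup `G` of the symmetric group on `Ω`. -/
def orbSet {Ω : Type*} (G : Subgroup (Equiv.Perm Ω)) (x : Ω) : Set Ω :=
  {y | ∃ g ∈ G, g x = y}

/-- The number of orbits of a subgroup `G` of the symmetric group on `Ω`. -/
noncomputable def numOrbits {Ω : Type*} (G : Subgroup (Equiv.Perm Ω)) : ℕ :=
  Nat.card (Set.range (orbSet G))

/-!
Write `c(σ)` for the number of cycles of `σ` (the orbits of `⟨σ⟩`), `π = α₁⋯αₖ`, and `t` for the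
number of orbits of `⟨α₁, …, αₖ⟩`.

Upper bound (Riemann–Hurwitz). Adjoining a transposition to a group merges at most two orbits, so
`c(τσ) ≤ c(σ) + 1` for a transposition `τ`; since `τ` flips the sign, `c(τσ) ≠ c(σ)`, and
`c(τσ) < c(σ)` when `τ` joins two cycles of `σ`. Writing each `αᵢ` as a product of `d − c(αᵢ)`
transpositions and multiplying them in one at a time gives
`Σᵢ (d − c(αᵢ)) + (d − c(π)) ≥ 2 (d − t)`, which with `Σᵢ ν(Dᵢ) = d − 1` reads `c(π) ≤ 2t − 1`.

Lower bound. As `π = ω²`, each cycle of `ω` is a cycle of `π` or splits into two. Choose one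
point `r` on each splitting cycle of `ω`: the transpositions `(r ω(r))` together with the `αᵢ`
generate a transitive group, because every step `z ↦ ω z` stays in one of its orbits. Hence there
are at least `t − 1` splitting cycles and `c(π) ≥ 2(t − 1)`. Finally `π` is a square, hence even,
and `d` is odd, so `c(π)` is odd and `c(π) ≥ 2t − 1`.
-/

open Equiv Equiv.Perm Set Subgroup

namespace Function.FactorsThrough

variable {X β γ : Type*} [Finite X] [Nonempty γ] {F : X → β} {G : X → γ}

theorem card_range_le (h : G.FactorsThrough F) : Nat.card (range G) ≤ Nat.card (range F) := by
  obtain ⟨e, rfl⟩ := (factorsThrough_iff G).mp h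
  rw [range_comp, Nat.card_coe_set_eq, Nat.card_coe_set_eq]
  exact ncard_image_le

theorem card_range_lt (h : G.FactorsThrough F) {u v : X} (hF : F u ≠ F v) (hG : G u = G v) :
    Nat.card (range G) < Nat.card (range F) := by
  obtain ⟨e, rfl⟩ := (factorsThrough_iff G).mp h
  rw [range_comp, Nat.card_coe_set_eq, Nat.card_coe_set_eq]
  exact lt_of_le_of_ne ncard_image_le fun hcard =>
    hF ((injOn_of_ncard_image_eq hcard) (mem_range_self u) (mem_range_self v) hG)

theorem card_range_le_add_one (h : G.FactorsThrough F) (v : X)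
    (hv : ∀ a b, G a = G b → F a = F b ∨ F a = F v ∨ F b = F v) :
    Nat.card (range F) ≤ Nat.card (range G) + 1 := by
  obtain ⟨e, rfl⟩ := (factorsThrough_iff G).mp h
  have hinj : InjOn e (range F \ {F v}) := by
    rintro _ ⟨⟨a, rfl⟩, ha⟩ _ ⟨⟨b, rfl⟩, hb⟩ hab
    rcases hv a b hab with h | h | h
    · exact h
    · exact absurd h ha
    · exact absurd h hb
  have hsub : e '' (range F \ {F v}) ⊆ e '' range F := image_mono sdiff_subset
  rw [range_comp, Nat.card_coe_set_eq, Nat.card_coe_set_eq,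
    ← ncard_sdiff_singleton_add_one (mem_range_self v), ← hinj.ncard_image]
  exact Nat.add_le_add_right (ncard_le_ncard hsub) 1

end Function.FactorsThrough

section Orbits

variable {Ω : Type*}

theorem mem_orbSet_self (G : Subgroup (Perm Ω)) (x : Ω) : x ∈ orbSet G x :=
  ⟨1, one_mem G, rfl⟩

theorem apply_mem_orbSet {G : Subgroup (Perm Ω)} {g : Perm Ω} (hg : g ∈ G) (x : Ω) :
    g x ∈ orbSet G x :=
  ⟨g, hg, rfl⟩

theorem orbSet_mono {G H : Subgroup (Perm Ω)} (h : G ≤ H) (x : Ω) : orbSet G x ⊆ orbSet H x :=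
  fun _ ⟨g, hg, hgx⟩ => ⟨g, h hg, hgx⟩

theorem orbSet_eq_of_mem {G : Subgroup (Perm Ω)} {x y : Ω} (h : y ∈ orbSet G x) :
    orbSet G y = orbSet G x := by
  obtain ⟨g, hg, rfl⟩ := h
  ext z
  constructor
  · rintro ⟨k, hk, rfl⟩
    exact ⟨k * g, mul_mem hk hg, rfl⟩
  · rintro ⟨k, hk, rfl⟩
    exact ⟨k * g⁻¹, mul_mem hk (inv_mem hg), by simp⟩

theorem apply_eq_of_mem_closure {β : Type*} {f : Ω → β} {S : Set (Perm Ω)}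
    (hS : ∀ g ∈ S, ∀ z, f (g z) = f z) {g : Perm Ω} (hg : g ∈ closure S) (z : Ω) :
    f (g z) = f z := by
  induction hg using closure_induction generalizing z with
  | mem g hg => exact hS g hg z
  | one => rfl
  | mul g h _ _ hg hh => rw [mul_apply, hg, hh]
  | inv g _ hg => simpa using (hg (g⁻¹ z)).symm

theorem orbSet_factorsThrough {G H : Subgroup (Perm Ω)} (h : G ≤ H) :
    (orbSet H).FactorsThrough (orbSet G) := fun a b hab => by
  have hb : b ∈ orbSet G a := hab ▸ mem_orbSet_self G b
  exact (orbSet_eq_of_mem (orbSet_mono h a hb)).symm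

theorem swap_apply_mem_orbSet [DecidableEq Ω] {G : Subgroup (Perm Ω)} {u v : Ω}
    (h : v ∈ orbSet G u) (z : Ω) : swap u v z ∈ orbSet G z := by
  rcases eq_or_ne z u with rfl | hu
  · simpa using h
  rcases eq_or_ne z v with rfl | hv
  · rw [swap_apply_right, orbSet_eq_of_mem h]
    exact mem_orbSet_self G u
  · simpa [swap_apply_of_ne_of_ne hu hv] using mem_orbSet_self G z

theorem closure_insert_swap_le_closure_insert_swap_mul [DecidableEq Ω] (σ : Perm Ω) (u v : Ω) :
    closure (insert (swap u v) {σ}) ≤ closure (insert (swap u v) {swap u v * σ}) := by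
  rw [closure_le]
  rintro g (rfl | rfl)
  · exact Subgroup.subset_closure (mem_insert _ _)
  · have := mul_mem (Subgroup.subset_closure (mem_insert (swap u v) {swap u v * g}))
      (Subgroup.subset_closure (mem_insert_of_mem (swap u v) (mem_singleton (swap u v * g))))
    rwa [swap_mul_self_mul] at this

theorem orbSet_zpowers (σ : Perm Ω) (x : Ω) : orbSet (zpowers σ) x = {y | σ.SameCycle x y} := by
  ext y
  simp only [orbSet, mem_zpowers_iff, mem_ofPred_eq, SameCycle]
  exact ⟨fun ⟨_, ⟨k, hk⟩, h⟩ => ⟨k, hk ▸ h⟩, fun ⟨k, h⟩ => ⟨_, ⟨k, rfl⟩, h⟩⟩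

theorem SubgroupTransitive.numOrbits_le_one {G : Subgroup (Perm Ω)} (h : SubgroupTransitive G) :
    numOrbits G ≤ 1 := by
  have : range (orbSet G) ⊆ {univ} := by
    rintro _ ⟨x, rfl⟩
    exact eq_univ_of_forall fun y => h x y
  exact (Nat.card_mono (finite_singleton _) this).trans_eq (Nat.card_unique)

variable [Finite Ω]

theorem numOrbits_le_card (G : Subgroup (Perm Ω)) : numOrbits G ≤ Nat.card Ω :=
  Finite.card_range_le _

theorem numOrbits_le_of_le {G H : Subgroup (Perm Ω)} (h : G ≤ H) : numOrbits H ≤ numOrbits G :=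
  (orbSet_factorsThrough h).card_range_le

theorem numOrbits_le_numOrbits_closure {S : Set (Perm Ω)} {H : Subgroup (Perm Ω)}
    (hS : ∀ g ∈ S, ∀ z, g z ∈ orbSet H z) : numOrbits H ≤ numOrbits (closure S) := by
  refine Function.FactorsThrough.card_range_le fun a b hab => ?_
  obtain ⟨g, hg, rfl⟩ : b ∈ orbSet (closure S) a := hab ▸ mem_orbSet_self _ b
  exact (apply_eq_of_mem_closure (fun g hg z => orbSet_eq_of_mem (hS g hg z)) hg a).symm

theorem numOrbits_closure_le_insert_swap_add_one [DecidableEq Ω] (S : Set (Perm Ω)) (u v : Ω) :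
    numOrbits (closure S) ≤ numOrbits (closure (insert (swap u v) S)) + 1 := by
  set F := orbSet (closure S)
  -- merging the class of `v` into that of `u` is invariant under `swap u v` and under `S`
  let merge : Ω → Set Ω := fun z => if F z = F v then F u else F z
  have hmerge : ∀ g ∈ insert (swap u v) S, ∀ z, merge (g z) = merge z := by
    rintro g (rfl | hg) z
    · rcases eq_or_ne z u with rfl | hu
      · simp [merge]
      rcases eq_or_ne z v with rfl | hv
      · simp [merge]
      · rw [swap_apply_of_ne_of_ne hu hv]
    · simp only [merge, F, orbSet_eq_of_mem (apply_mem_orbSet (subset_closure hg) z)]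
  refine (orbSet_factorsThrough (closure_mono (subset_insert _ _))).card_range_le_add_one v
    fun a b hab => ?_
  obtain ⟨g, hg, rfl⟩ : b ∈ orbSet _ a := hab ▸ mem_orbSet_self _ b
  have hg := apply_eq_of_mem_closure hmerge hg a
  by_cases ha : F a = F v
  · exact Or.inr (Or.inl ha)
  by_cases hga : F (g a) = F v
  · exact Or.inr (Or.inr hga)
  · simp only [merge, ha, hga, if_false] at hg
    exact Or.inl hg.symm

theorem numOrbits_closure_insert_swap_lt [DecidableEq Ω] {S : Set (Perm Ω)} {u v : Ω}
    (h : v ∉ orbSet (closure S) u) :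
    numOrbits (closure (insert (swap u v) S)) < numOrbits (closure S) := by
  refine (orbSet_factorsThrough (closure_mono (subset_insert _ _))).card_range_lt
    (u := u) (v := v) (fun huv => h (huv ▸ mem_orbSet_self _ v)) ?_
  exact (orbSet_eq_of_mem (by
    simpa using apply_mem_orbSet (g := swap u v) (subset_closure (mem_insert _ S)) u)).symm

end Orbits

section Cycles

variable {Ω : Type*} [Fintype Ω] [DecidableEq Ω]

theorem numOrbits_closure_le_union_add_card (S : Set (Perm Ω))
    (T : Finset (Perm Ω)) (hT : ∀ τ ∈ T, τ.IsSwap) :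
    numOrbits (closure S) ≤ numOrbits (closure (S ∪ T)) + T.card := by
  induction T using Finset.induction_on with
  | empty => simp
  | insert τ T hτ ih =>
    obtain ⟨u, v, -, rfl⟩ := hT _ (Finset.mem_insert_self _ _)
    have := numOrbits_closure_le_insert_swap_add_one (S ∪ T) u v
    rw [Finset.coe_insert, union_insert, Finset.card_insert_of_notMem hτ]
    have := ih fun τ hτ => hT τ (Finset.mem_insert_of_mem hτ)
    omega

theorem orbSet_zpowers_of_notMem_support {σ : Perm Ω} {x : Ω} (hx : x ∉ σ.support) :
    orbSet (zpowers σ) x = {x} := by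
  ext y
  rw [orbSet_zpowers, mem_ofPred_eq, mem_singleton_iff, eq_comm]
  exact ⟨fun h => h.eq_of_left (notMem_support.mp hx), fun h => h ▸ SameCycle.refl σ x⟩

theorem orbSet_zpowers_of_mem_support {σ : Perm Ω} {x : Ω} (hx : x ∈ σ.support) :
    orbSet (zpowers σ) x = (σ.cycleOf x).support := by
  ext y
  rw [orbSet_zpowers, mem_ofPred_eq, Finset.mem_coe, mem_support_cycleOf_iff]
  exact ⟨fun h => ⟨h, hx⟩, And.left⟩

theorem orbSet_zpowers_image_support (σ : Perm Ω) :
    orbSet (zpowers σ) '' σ.support =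
      (fun c : Perm Ω => (c.support : Set Ω)) '' σ.cycleFactorsFinset := by
  ext A
  constructor
  · rintro ⟨x, hx, rfl⟩
    exact ⟨σ.cycleOf x, cycleOf_mem_cycleFactorsFinset_iff.mpr hx,
      (orbSet_zpowers_of_mem_support hx).symm⟩
  · rintro ⟨c, hc, rfl⟩
    obtain ⟨a, ha⟩ := (mem_cycleFactorsFinset_iff.mp hc).1.nonempty_support
    refine ⟨a, mem_cycleFactorsFinset_support_le hc ha, ?_⟩
    rw [orbSet_zpowers_of_mem_support (mem_cycleFactorsFinset_support_le hc ha),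
      ← cycle_is_cycleOf ha hc]

theorem numOrbits_zpowers_eq_card_fullCycleType (σ : Perm Ω) :
    numOrbits (zpowers σ) = (fullCycleType σ).card := by
  set O := orbSet (zpowers σ) with hO
  have hdisj : Disjoint (O '' σ.support) (O '' (σ.support : Set Ω)ᶜ) := by
    rw [disjoint_left]
    rintro _ ⟨x, hx, rfl⟩ ⟨y, hy, hxy⟩
    have : x ∈ O y := hxy ▸ mem_orbSet_self _ x
    rw [hO, orbSet_zpowers_of_notMem_support hy, mem_singleton_iff] at this
    exact hy (this ▸ hx)
  have hsupp : (O '' σ.support).ncard = σ.cycleType.card := by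
    rw [orbSet_zpowers_image_support, InjOn.ncard_image, ncard_coe_finset, cycleType_def,
      Multiset.card_map]
    · rfl
    intro c hc c' hc' hcc'
    obtain ⟨a, ha⟩ := (mem_cycleFactorsFinset_iff.mp hc).1.nonempty_support
    replace hcc' : (c.support : Set Ω) = c'.support := hcc'
    have ha' : a ∈ c'.support := by rw [← Finset.mem_coe, ← hcc']; exact ha
    rw [cycle_is_cycleOf ha hc, cycle_is_cycleOf ha' hc']
  have hfix : (O '' (σ.support : Set Ω)ᶜ).ncard = Fintype.card Ω - σ.support.card := by
    rw [InjOn.ncard_image, ← Finset.coe_compl, ncard_coe_finset, Finset.card_compl]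
    intro x hx y hy hxy
    simpa [O, orbSet_zpowers_of_notMem_support hx, orbSet_zpowers_of_notMem_support hy] using hxy
  rw [numOrbits, Nat.card_coe_set_eq, ← image_univ, ← union_compl_self (σ.support : Set Ω),
    image_union, ncard_union_eq hdisj, hsupp, hfix, fullCycleType, Multiset.card_add,
    Multiset.card_replicate]

theorem sign_eq_neg_one_pow_card_sub_numOrbits (σ : Perm Ω) :
    sign σ = (-1) ^ (Fintype.card Ω - numOrbits (zpowers σ)) := by
  have hs : σ.support.card ≤ Fintype.card Ω := Finset.card_le_univ _
  have hc : σ.cycleType.card ≤ σ.support.card := by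
    rw [← sum_cycleType]
    simpa using Multiset.card_nsmul_le_sum fun k hk =>
      one_le_two.trans (two_le_of_mem_cycleType hk)
  rw [sign_of_cycleType, sum_cycleType, numOrbits_zpowers_eq_card_fullCycleType, fullCycleType,
    Multiset.card_add, Multiset.card_replicate]
  generalize σ.support.card = s at hs hc ⊢
  generalize σ.cycleType.card = c at hc ⊢
  obtain ⟨a, rfl⟩ := Nat.exists_eq_add_of_le hc
  rw [show Fintype.card Ω - (c + (Fintype.card Ω - (c + a))) = a by omega,
    show c + a + c = a + 2 * c by ring, pow_add, pow_mul, neg_one_sq, one_pow, mul_one]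

theorem numOrbits_zpowers_swap_mul_le (σ : Perm Ω) (u v : Ω) :
    numOrbits (zpowers (swap u v * σ)) ≤ numOrbits (zpowers σ) + 1 := by
  have h1 := numOrbits_closure_le_insert_swap_add_one {swap u v * σ} u v
  have h2 := numOrbits_le_of_le ((closure_mono (subset_insert (swap u v) {σ})).trans
    (closure_insert_swap_le_closure_insert_swap_mul σ u v))
  rw [← zpowers_eq_closure] at h1 h2
  omega

theorem numOrbits_zpowers_swap_mul_lt {σ : Perm Ω} {u v : Ω} (h : v ∉ orbSet (zpowers σ) u) :
    numOrbits (zpowers (swap u v * σ)) < numOrbits (zpowers σ) := by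
  have huv : u ≠ v := fun huv => h (huv ▸ mem_orbSet_self _ u)
  have h1 := numOrbits_closure_le_insert_swap_add_one {swap u v * σ} u v
  have h2 := numOrbits_le_of_le (closure_insert_swap_le_closure_insert_swap_mul σ u v)
  have h3 := numOrbits_closure_insert_swap_lt (S := {σ}) (by rwa [← zpowers_eq_closure])
  rw [← zpowers_eq_closure] at h1 h3
  -- multiplying by a swap flips the sign, hence the parity of the number of cycles
  have hne : numOrbits (zpowers (swap u v * σ)) ≠ numOrbits (zpowers σ) := fun heq =>
    units_ne_neg_self (sign σ) <| by
      rw [← neg_one_mul (sign σ), ← sign_swap huv, ← Perm.sign_mul,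
        sign_eq_neg_one_pow_card_sub_numOrbits (swap u v * σ), heq,
        ← sign_eq_neg_one_pow_card_sub_numOrbits]
  omega

theorem exists_list_isSwap_prod_eq (g : Perm Ω) :
    ∃ L : List (Perm Ω), (∀ τ ∈ L, τ.IsSwap) ∧ L.prod = g ∧
      L.length + numOrbits (zpowers g) ≤ Fintype.card Ω := by
  induction hn : g.support.card using Nat.strong_induction_on generalizing g with
  | _ n ih =>
    by_cases hg : g = 1
    · refine ⟨[], by simp, hg.symm, ?_⟩
      simpa [Nat.card_eq_fintype_card] using numOrbits_le_card (zpowers g)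
    obtain ⟨x, hx⟩ : ∃ x, g x ≠ x := by simpa [Perm.ext_iff] using hg
    obtain ⟨L, hL, hprod, hlen⟩ :=
      ih _ (hn ▸ card_support_swap_mul hx) (swap x (g x) * g) rfl
    have hcyc := numOrbits_zpowers_swap_mul_lt (σ := swap x (g x) * g) (u := x) (v := g x) (by
      rw [orbSet_zpowers_of_notMem_support (by simp), mem_singleton_iff]
      exact hx)
    rw [swap_mul_self_mul] at hcyc
    refine ⟨swap x (g x) :: L, ?_, by rw [List.prod_cons, hprod, swap_mul_self_mul], ?_⟩
    · simpa using ⟨⟨x, g x, hx.symm, rfl⟩, hL⟩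
    · rw [List.length_cons]
      omega

theorem numOrbits_bot : numOrbits (⊥ : Subgroup (Perm Ω)) = Fintype.card Ω := by
  simp [← zpowers_one_eq_bot, numOrbits_zpowers_eq_card_fullCycleType, fullCycleType]

theorem numOrbits_zpowers_prod_add_card_le (L : List (Perm Ω)) (hL : ∀ τ ∈ L, τ.IsSwap) :
    numOrbits (zpowers L.prod) + Fintype.card Ω ≤
      2 * numOrbits (closure {τ | τ ∈ L}) + L.length := by
  induction L with
  | nil => simp [numOrbits_bot, two_mul]
  | cons τ L ih =>
    obtain ⟨u, v, -, rfl⟩ := hL τ List.mem_cons_self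
    have ih := ih fun τ hτ => hL τ (List.mem_cons_of_mem _ hτ)
    have hgen : {τ | τ ∈ swap u v :: L} = insert (swap u v) {τ | τ ∈ L} := by
      ext; simp
    rw [List.prod_cons, List.length_cons, hgen]
    by_cases h : v ∈ orbSet (closure {τ | τ ∈ L}) u
    · have h1 := numOrbits_zpowers_swap_mul_le L.prod u v
      have h2 : numOrbits (closure {τ | τ ∈ L}) ≤
          numOrbits (closure (insert (swap u v) {τ | τ ∈ L})) := by
        refine numOrbits_le_numOrbits_closure ?_
        rintro g (rfl | hg) z
        · exact swap_apply_mem_orbSet h z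
        · exact apply_mem_orbSet (Subgroup.subset_closure hg) z
      omega
    · have hprod : L.prod ∈ closure {τ | τ ∈ L} :=
        list_prod_mem fun τ hτ => Subgroup.subset_closure hτ
      have h1 := numOrbits_zpowers_swap_mul_lt fun h' => h (orbSet_mono (zpowers_le.mpr hprod) u h')
      have h2 := numOrbits_closure_le_insert_swap_add_one {τ | τ ∈ L} u v
      omega

theorem exists_list_isSwap_prod_eq_prod (l : List (Perm Ω)) :
    ∃ L : List (Perm Ω), (∀ τ ∈ L, τ.IsSwap) ∧ L.prod = l.prod ∧
      L.length + (l.map fun g => numOrbits (zpowers g)).sum ≤ Fintype.card Ω * l.length ∧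
      closure {g | g ∈ l} ≤ closure {τ | τ ∈ L} := by
  induction l with
  | nil => exact ⟨[], by simp, rfl, by simp, by simp⟩
  | cons g l ih =>
    obtain ⟨L, hL, hprod, hlen, hcl⟩ := ih
    obtain ⟨M, hM, hMprod, hMlen⟩ := exists_list_isSwap_prod_eq g
    refine ⟨M ++ L, ?_, by rw [List.prod_append, hMprod, hprod, List.prod_cons], ?_, ?_⟩
    · intro τ hτ
      rcases List.mem_append.mp hτ with hτ | hτ
      exacts [hM τ hτ, hL τ hτ]
    · simp only [List.length_append, List.map_cons, List.sum_cons, List.length_cons, Nat.mul_succ]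
      omega
    · rw [closure_le]
      intro h hh
      rcases List.mem_cons.mp hh with rfl | hh
      · rw [← hMprod]
        exact list_prod_mem fun τ hτ => Subgroup.subset_closure (List.mem_append_left _ hτ)
      · exact closure_mono (fun τ hτ => List.mem_append_right _ hτ)
          (hcl (Subgroup.subset_closure hh))

theorem sum_numOrbits_zpowers_add_numOrbits_zpowers_prod_le (l : List (Perm Ω)) :
    (l.map fun g => numOrbits (zpowers g)).sum + numOrbits (zpowers l.prod) + Fintype.card Ω ≤
      Fintype.card Ω * l.length + 2 * numOrbits (closure {g | g ∈ l}) := by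
  obtain ⟨L, hL, hprod, hlen, hcl⟩ := exists_list_isSwap_prod_eq_prod l
  have h1 := numOrbits_zpowers_prod_add_card_le L hL
  have h2 := numOrbits_le_of_le hcl
  rw [hprod] at h1
  omega

end Cycles

section Squares

variable {Ω : Type*}

theorem apply_mem_orbSet_zpowers_of_commute {g σ : Perm Ω} (hc : Commute g σ) {x y : Ω}
    (h : y ∈ orbSet (zpowers σ) x) : g y ∈ orbSet (zpowers σ) (g x) := by
  rw [orbSet_zpowers] at h ⊢
  obtain ⟨k, rfl⟩ := h
  exact ⟨k, by rw [← mul_apply, ← (hc.zpow_right k).eq, mul_apply]⟩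

theorem mem_orbSet_zpowers_sq_or {ω : Perm Ω} {x y : Ω} (h : y ∈ orbSet (zpowers ω) x) :
    y ∈ orbSet (zpowers (ω ^ 2)) x ∨ y ∈ orbSet (zpowers (ω ^ 2)) (ω x) := by
  simp only [orbSet_zpowers, mem_ofPred_eq] at h ⊢
  obtain ⟨k, rfl⟩ := h
  obtain ⟨m, rfl | rfl⟩ := Int.even_or_odd' k
  · exact Or.inl ⟨m, by rw [← zpow_natCast, ← zpow_mul, Nat.cast_ofNat]⟩
  · refine Or.inr ⟨m, ?_⟩
    rw [← mul_apply, ← zpow_natCast, ← zpow_mul, Nat.cast_ofNat, ← zpow_add_one]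

theorem odd_numOrbits_zpowers_sq [Fintype Ω] [DecidableEq Ω] (hodd : Odd (Fintype.card Ω))
    (ω : Perm Ω) :
    Odd (numOrbits (zpowers (ω ^ 2))) := by
  have h := sign_eq_neg_one_pow_card_sub_numOrbits (ω ^ 2)
  rw [map_pow, Int.units_sq, eq_comm, neg_one_pow_eq_one_iff_even (by decide)] at h
  have hle := numOrbits_le_card (zpowers (ω ^ 2))
  rw [Nat.card_eq_fintype_card] at hle
  obtain ⟨a, ha⟩ := h
  obtain ⟨b, hb⟩ := hodd
  exact ⟨b - a, by omega⟩

def splitPoints (ω : Perm Ω) : Set Ω := {z | ω z ∉ orbSet (zpowers (ω ^ 2)) z}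

theorem orbSet_apply_eq_of_sq_mem_of_swap_mem [DecidableEq Ω] {H : Subgroup (Perm Ω)}
    {ω : Perm Ω} (hsq : ω ^ 2 ∈ H) {R : Set Ω}
    (hR : SurjOn (orbSet (zpowers ω)) R (orbSet (zpowers ω) '' splitPoints ω))
    (hswap : ∀ r ∈ R, swap r (ω r) ∈ H) (z : Ω) : orbSet H (ω z) = orbSet H z := by
  have hF : ∀ {x y}, y ∈ orbSet (zpowers (ω ^ 2)) x → orbSet H y = orbSet H x :=
    fun h => orbSet_eq_of_mem (orbSet_mono (zpowers_le.mpr hsq) _ h)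
  have hR' : ∀ r ∈ R, orbSet H (ω r) = orbSet H r := fun r hr => by
    simpa using orbSet_eq_of_mem (apply_mem_orbSet (hswap r hr) r)
  have hcomm : Commute ω (ω ^ 2) := Commute.self_pow ω 2
  by_cases hz : z ∈ splitPoints ω
  swap
  · exact hF (not_not.mp hz)
  obtain ⟨r, hr, hrz⟩ := hR ⟨z, hz, rfl⟩
  rcases mem_orbSet_zpowers_sq_or (hrz ▸ mem_orbSet_self _ r : r ∈ orbSet (zpowers ω) z)
    with h | h
  · calc orbSet H (ω z) = orbSet H (ω r) :=
          (hF (apply_mem_orbSet_zpowers_of_commute hcomm h)).symm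
      _ = orbSet H r := hR' r hr
      _ = orbSet H z := hF h
  · have hωr := apply_mem_orbSet_zpowers_of_commute hcomm h
    rw [← mul_apply, ← pow_two] at hωr
    calc orbSet H (ω z) = orbSet H r := (hF h).symm
      _ = orbSet H (ω r) := (hR' r hr).symm
      _ = orbSet H ((ω ^ 2) z) := hF hωr
      _ = orbSet H z := hF (apply_mem_orbSet (mem_zpowers _) z)

theorem numOrbits_closure_le_ncard_add_one [Fintype Ω] [DecidableEq Ω] {S : Set (Perm Ω)}
    {ω : Perm Ω} (hsq : ω ^ 2 ∈ closure S) (htrans : SubgroupTransitive (closure (S ∪ {ω})))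
    {R : Set Ω} (hRs : R ⊆ splitPoints ω)
    (hR : SurjOn (orbSet (zpowers ω)) R (orbSet (zpowers ω) '' splitPoints ω)) :
    numOrbits (closure S) ≤ R.ncard + 1 := by
  classical
  set T : Finset (Perm Ω) := R.toFinset.image fun r => swap r (ω r)
  have hT : ∀ τ ∈ T, τ.IsSwap := by
    simp only [T, Finset.mem_image, mem_toFinset]
    rintro _ ⟨r, hr, rfl⟩
    refine ⟨r, ω r, fun h => hRs hr ?_, rfl⟩
    rw [← h]
    exact mem_orbSet_self _ r
  have hω := orbSet_apply_eq_of_sq_mem_of_swap_mem (H := closure (S ∪ T))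
    (closure_mono subset_union_left hsq) hR fun r hr => Subgroup.subset_closure
      (Or.inr (Finset.mem_image_of_mem (fun r => swap r (ω r)) (mem_toFinset.mpr hr)))
  have h1 := numOrbits_closure_le_union_add_card S T hT
  have h2 : numOrbits (closure (S ∪ T)) ≤ numOrbits (closure (S ∪ {ω})) := by
    refine numOrbits_le_numOrbits_closure ?_
    rintro g (hg | hg) z
    · exact apply_mem_orbSet (Subgroup.subset_closure (Or.inl hg)) z
    · rw [mem_singleton_iff.mp hg, ← hω z]
      exact mem_orbSet_self _ (ω z)
  have h3 : T.card ≤ R.ncard := Finset.card_image_le.trans_eq (ncard_eq_toFinset_card' R).symm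
  have h4 := htrans.numOrbits_le_one
  omega

theorem two_mul_ncard_le_numOrbits_zpowers_sq [Finite Ω] {ω : Perm Ω} {R : Set Ω}
    (hRs : R ⊆ splitPoints ω) (hR : InjOn (orbSet (zpowers ω)) R) :
    2 * R.ncard ≤ numOrbits (zpowers (ω ^ 2)) := by
  set F := orbSet (zpowers (ω ^ 2))
  set W := orbSet (zpowers ω)
  have hFW : W.FactorsThrough F :=
    orbSet_factorsThrough (zpowers_le.mpr (pow_mem (mem_zpowers ω) 2))
  have hWω : ∀ x, W (ω x) = W x := fun x => orbSet_eq_of_mem (apply_mem_orbSet (mem_zpowers ω) x)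
  have hWinj : ∀ r r' : R, W r = W r' → r = r' := fun r r' h => Subtype.ext (hR r.2 r'.2 h)
  have hmixed : ∀ r r' : R, F r ≠ F (ω r') := by
    intro r r' h
    obtain rfl := hWinj r r' ((hFW h).trans (hWω r'))
    apply hRs r.2
    change ω r ∈ F r
    rw [h]
    exact mem_orbSet_self _ _
  let p : R ⊕ R → Ω := Sum.elim (↑) fun r => ω r
  have hinj : Function.Injective fun s => (⟨F (p s), mem_range_self _⟩ : range F) := by
    rintro (r | r) (r' | r') h <;> simp only [Subtype.mk.injEq, p, Sum.elim_inl, Sum.elim_inr] at h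
    · exact congrArg Sum.inl (hWinj r r' (hFW h))
    · exact absurd h (hmixed r r')
    · exact absurd h.symm (hmixed r' r)
    · exact congrArg Sum.inr (hWinj r r' (by simpa only [hWω] using hFW h))
  calc 2 * R.ncard = Nat.card (R ⊕ R) := by rw [Nat.card_sum, Nat.card_coe_set_eq, two_mul]
    _ ≤ numOrbits (zpowers (ω ^ 2)) := Nat.card_le_card_of_injective _ hinj

theorem two_mul_numOrbits_closure_le [Fintype Ω] [DecidableEq Ω] {S : Set (Perm Ω)} {ω : Perm Ω}
    (hsq : ω ^ 2 ∈ closure S) (hodd : Odd (Fintype.card Ω))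
    (htrans : SubgroupTransitive (closure (S ∪ {ω}))) :
    2 * numOrbits (closure S) ≤ numOrbits (zpowers (ω ^ 2)) + 1 := by
  obtain ⟨R, hRs, hR⟩ := exists_subset_bijOn (splitPoints ω) (orbSet (zpowers ω))
  have h1 := numOrbits_closure_le_ncard_add_one hsq htrans hRs hR.surjOn
  have h2 := two_mul_ncard_le_numOrbits_zpowers_sq hRs hR.injOn
  obtain ⟨m, hm⟩ := odd_numOrbits_zpowers_sq hodd ω
  omega

end Squares

theorem nu_add_card (D : Multiset ℕ) (hD : ∀ x ∈ D, 0 < x) : nu D + D.card = D.sum := by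
  calc nu D + D.card = (D.map fun x => x - 1 + 1).sum := by simp [nu, Multiset.sum_map_add]
    _ = (D.map id).sum :=
      congrArg _ (Multiset.map_congr rfl fun x hx => Nat.sub_add_cancel (hD x hx))
    _ = D.sum := by rw [Multiset.map_id]

theorem statement_17_general {Ω : Type*} [Fintype Ω] [DecidableEq Ω] (d k : ℕ)
    (hcard : Fintype.card Ω = d) (hd : Odd d)
    (D : Fin k → Multiset ℕ) (hP : ∀ i, IsPartitionOf d (D i))
    (hsum : ∑ i, nu (D i) = d - 1)
    (α : Fin k → Equiv.Perm Ω) (hα : ∀ i, fullCycleType (α i) = D i)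
    (t : ℕ)
    (horb : numOrbits (Subgroup.closure (Set.range α)) = t)
    (ω : Equiv.Perm Ω) (hω : ω ^ 2 = (List.ofFn α).prod)
    (htrans : SubgroupTransitive (Subgroup.closure (Set.range α ∪ {ω}))) :
    numOrbits (Subgroup.zpowers (List.ofFn α).prod) = 2 * t - 1 := by
  have hgen : {g | g ∈ List.ofFn α} = range α := by
    ext
    simp [List.mem_ofFn]
  have hupper := sum_numOrbits_zpowers_add_numOrbits_zpowers_prod_le (List.ofFn α)
  rw [hgen, horb, List.length_ofFn, List.map_ofFn, List.sum_ofFn, hcard] at hupper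
  have hlower := two_mul_numOrbits_closure_le
    (hω ▸ list_prod_mem fun g hg => Subgroup.subset_closure (hgen ▸ hg)) (hcard ▸ hd) htrans
  rw [horb, hω] at hlower
  have hcycles : ∑ i, numOrbits (zpowers (α i)) + (d - 1) = d * k := by
    rw [← hsum, ← Finset.sum_add_distrib, Finset.sum_congr rfl fun i _ => ?_, Finset.sum_const,
      Finset.card_univ, Fintype.card_fin, smul_eq_mul, mul_comm]
    rw [numOrbits_zpowers_eq_card_fullCycleType, hα, add_comm, nu_add_card _ (hP i).1, (hP i).2]
  simp only [Function.comp_apply] at hupper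
  generalize d * k = dk at hupper hcycles
  obtain ⟨m, rfl⟩ := hd
  omega

/-- For `k ≥ 3`, `gcd(D₁) ≠ 1`, if `⟨α₁,…,αₖ⟩` has `t > 1` orbits and there
is `ω` with `ω² = α₁⋯αₖ` making `⟨α₁,…,αₖ,ω⟩` transitive, then `α₁⋯αₖ` is a product of
exactly `2t − 1` disjoint cycles (orbits of `⟨α₁⋯αₖ⟩`, fixed points included). -/
theorem statement_17 {Ω : Type*} [Fintype Ω] [DecidableEq Ω] (d k : ℕ) [NeZero k]
    (hcard : Fintype.card Ω = d) (hd : Odd d) (hdpos : 0 < d) (hk : 3 ≤ k)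
    (D : Fin k → Multiset ℕ) (hP : ∀ i, IsPartitionOf d (D i))
    (hsum : ∑ i, nu (D i) = d - 1)
    (hgcd : (D 0).gcd ≠ 1)
    (α : Fin k → Equiv.Perm Ω) (hα : ∀ i, fullCycleType (α i) = D i)
    (t : ℕ) (ht : 1 < t)
    (horb : numOrbits (Subgroup.closure (Set.range α)) = t)
    (ω : Equiv.Perm Ω) (hω : ω ^ 2 = (List.ofFn α).prod)
    (htrans : SubgroupTransitive (Subgroup.closure (Set.range α ∪ {ω}))) :
    numOrbits (Subgroup.zpowers (List.ofFn α).prod) = 2 * t - 1 :=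
  statement_17_general d k hcard hd D hP hsum α hα t horb ω hω htrans
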